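/- (Theorem 2, L² lower bound) Let p ≥ 0 be an integer. There exists a constant C₂ > 0, depending only on p (independent of h, u and u^R), with the following property. Let a < b, let N be a positive integer, h = (b−a)/N, x_i = a + i h. Let u : [a,b] → ℝ be (p+1)-times continuously differentiable, and let u^R : (a,b) → ℝ coincide on each cell (x_i, x_{i+1}) with a polynomial of degree at most p. For 1 ≤ i ≤ N−1 and 0 ≤ k ≤ p set J^k_i = (d^k/dx^k)u^R(x_i⁺) − (d^k/dx^k)u^R(x_i⁻) and D^k_i = J^k_i / h^{p+1−k}. Then ( ∫_a^b (u − u^R)² )^{1/2} ≥ h^{p+1} [ ( Σ_{i=1}^{N−1} h · Q(D^0_i, …, D^p_i) )^{1/2} − C₂ ( ∫_a^b (u^{(p+1)}(x))² dx )^{1/2} ]. -/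

import Mathlib

/-!
At a node `x_i` let `T` be the degree-`p` Taylor polynomial of `u` at `x_i`. After the rescaling
`x = x_i + h ξ`, the polynomial `h^{-(p+1)} (T - (q_{i-1} + q_i) / 2)` is admissible in
`Q(D_i)`, and its `Qerr` is `h^{-(2p+3)} ∫ (T - u^R)²` over the dual cell
`[x_i - h/2, x_i + h/2]`. On that cell `T - u^R = (u - u^R) + (T - u)`, and the integral form of
the Taylor remainder together with Cauchy–Schwarz gives
`∫ (u - T)² ≤ (h^{p+1} / p!)² ∫ (u^{(p+1)})²`. Summing over the nodes with
`(x + y)² ≤ (1 + t) x² + (1 + 1/t) y²` and optimizing in `t` (Minkowski's inequality) yields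
the bound with `C₂ = 1 / p!`.
-/

open MeasureTheory Polynomial

/-- `fd p d ξ = (1/2) Σ_{k=0}^p (d_k/k!) ξ^k`. -/
noncomputable def fd (p : ℕ) (d : Fin (p+1) → ℝ) (ξ : ℝ) : ℝ :=
  (1/2) * ∑ k : Fin (p+1), d k / (Nat.factorial k) * ξ ^ (k : ℕ)

/-- The error functional whose infimum over polynomials of degree ≤ p defines `Qform`. -/
noncomputable def Qerr (p : ℕ) (d : Fin (p+1) → ℝ) (v : Polynomial ℝ) : ℝ :=
  (∫ ξ in (-(1:ℝ)/2)..0, (v.eval ξ + fd p d ξ)^2) +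
  (∫ ξ in (0:ℝ)..(1/2), (v.eval ξ - fd p d ξ)^2)

/-- `Q(d) = inf_{v ∈ P} Qerr p d v`. -/
noncomputable def Qform (p : ℕ) (d : Fin (p+1) → ℝ) : ℝ :=
  sInf {q : ℝ | ∃ v : Polynomial ℝ, v.natDegree ≤ p ∧ q = Qerr p d v}

/-- The scaled jump vector `(D⁰,…,Dᵖ)` at a node `xi`, where `ql`/`qr` are the
polynomial pieces to the left/right of `xi`:
`Dᵏ = ((d^k/dx^k) qr(xi) - (d^k/dx^k) ql(xi)) / h^{p+1-k}`. -/
noncomputable def Dvec (p : ℕ) (h xi : ℝ) (ql qr : Polynomial ℝ) : Fin (p+1) → ℝ :=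
  fun k => ((Polynomial.derivative^[(k:ℕ)] qr).eval xi -
            (Polynomial.derivative^[(k:ℕ)] ql).eval xi) / h^(p+1-(k:ℕ))

open Set
open scoped Nat

lemma add_sq_le_weighted (x y : ℝ) {t : ℝ} (ht : 0 < t) :
    (x + y) ^ 2 ≤ (1 + t) * x ^ 2 + (1 + 1 / t) * y ^ 2 := by
  have h : (1 + t) * x ^ 2 + (1 + 1 / t) * y ^ 2 - (x + y) ^ 2 = (t * x - y) ^ 2 / t := by
    field_simp
    ring
  linarith [div_nonneg (sq_nonneg (t * x - y)) ht.le]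

lemma sqrt_le_add_of_forall_pos {A X Y : ℝ} (hX : 0 ≤ X) (hY : 0 ≤ Y)
    (h : ∀ t > 0, A ≤ (1 + t) * X ^ 2 + (1 + 1 / t) * Y ^ 2) : √A ≤ X + Y := by
  suffices A ≤ (X + Y) ^ 2 from
    (Real.sqrt_le_sqrt this).trans_eq (Real.sqrt_sq (add_nonneg hX hY))
  -- `t = (Y + ε) / (X + ε)` nearly balances the two terms
  have hε : ∀ ε > 0, A ≤ (X + Y) ^ 2 + ε * (X + Y) := by
    intro ε hε
    have hXε : 0 < X + ε := by linarith
    have hYε : 0 < Y + ε := by linarith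
    have h1 : (Y + ε) / (X + ε) * X ^ 2 ≤ (Y + ε) * X := by
      rw [div_mul_eq_mul_div, div_le_iff₀ hXε]
      nlinarith [mul_nonneg hYε.le hX]
    have h2 : 1 / ((Y + ε) / (X + ε)) * Y ^ 2 ≤ (X + ε) * Y := by
      rw [one_div_div, div_mul_eq_mul_div, div_le_iff₀ hYε]
      nlinarith [mul_nonneg hXε.le hY]
    nlinarith [h ((Y + ε) / (X + ε)) (by positivity)]
  refine le_of_forall_pos_le_add fun δ hδ => (hε (δ / (X + Y + 1)) (by positivity)).trans ?_
  have : δ / (X + Y + 1) * (X + Y) ≤ δ := by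
    rw [div_mul_eq_mul_div, div_le_iff₀ (by positivity)]
    nlinarith
  linarith

lemma sq_integral_abs_le {c d : ℝ} (hcd : c ≤ d) {f : ℝ → ℝ}
    (hf : IntervalIntegrable f volume c d)
    (hf2 : IntervalIntegrable (fun x => f x ^ 2) volume c d) :
    (∫ x in c..d, |f x|) ^ 2 ≤ (d - c) * ∫ x in c..d, f x ^ 2 := by
  have hquad : ∀ m : ℝ,
      0 ≤ (d - c) * (m * m) + (-2 * ∫ x in c..d, |f x|) * m + ∫ x in c..d, f x ^ 2 := by
    intro m
    have hexpand : ∫ x in c..d, (|f x| - m) ^ 2 =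
        (d - c) * (m * m) + (-2 * ∫ x in c..d, |f x|) * m + ∫ x in c..d, f x ^ 2 := by
      have : ∀ x, (|f x| - m) ^ 2 = f x ^ 2 - (2 * m) * |f x| + m * m := fun x => by
        rw [sub_sq, sq_abs]; ring
      simp only [this]
      rw [intervalIntegral.integral_add (hf2.sub (hf.abs.const_mul _)) intervalIntegrable_const,
        intervalIntegral.integral_sub hf2 (hf.abs.const_mul _),
        intervalIntegral.integral_const_mul, intervalIntegral.integral_const, smul_eq_mul]
      ring
    rw [← hexpand]
    exact intervalIntegral.integral_nonneg hcd fun x _ => sq_nonneg _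
  have := discrim_le_zero hquad
  rw [discrim] at this
  linarith

lemma sum_integral_le_integral_of_nonneg {a b : ℝ} {c : ℕ → ℝ} {m n : ℕ} (hmn : m ≤ n)
    (hc : Monotone c) (ha : a ≤ c m) (hb : c n ≤ b) {F : ℝ → ℝ} (hF : ∀ x, 0 ≤ F x)
    (hint : IntervalIntegrable F volume a b) :
    ∑ i ∈ Finset.Ico m n, ∫ x in c i..c (i + 1), F x ≤ ∫ x in a..b, F x := by
  have hmem : ∀ i ∈ Icc m n, c i ∈ uIcc a b := fun i hi =>
    mem_uIcc_of_le (ha.trans (hc hi.1)) ((hc hi.2).trans hb)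
  rw [intervalIntegral.sum_integral_adjacent_intervals_Ico hmn fun i hi =>
    hint.mono_set (uIcc_subset_uIcc (hmem i (Ico_subset_Icc_self hi))
      (hmem (i + 1) ⟨hi.1.trans i.le_succ, hi.2⟩))]
  exact intervalIntegral.integral_mono_interval ha (hc hmn) hb
    (Filter.Eventually.of_forall hF) hint

lemma intervalIntegrable_sq_sub_of_eqOn_Ioo {c d : ℝ} (hcd : c ≤ d) {u v g : ℝ → ℝ}
    (hu : ContinuousOn u (Icc c d)) (hg : ContinuousOn g (Icc c d)) (hv : EqOn v g (Ioo c d)) :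
    IntervalIntegrable (fun x => (u x - v x) ^ 2) volume c d :=
  ((hu.sub hg).pow 2).intervalIntegrable_of_Icc hcd |>.congr_uIoo fun x hx => by
    rw [uIoo_of_le hcd] at hx
    simp only [Pi.pow_apply, Pi.sub_apply, hv hx]

lemma intervalIntegrable_sq_sub_of_piecewise {a h : ℝ} (hh : 0 ≤ h) {N : ℕ} {u v : ℝ → ℝ}
    (hu : ContinuousOn u (Icc a (a + N * h))) (q : ℕ → ℝ[X])
    (hq : ∀ i < N, ∀ x ∈ Ioo (a + i * h) (a + (i + 1) * h), v x = (q i).eval x) :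
    IntervalIntegrable (fun x => (u x - v x) ^ 2) volume a (a + N * h) := by
  have := IntervalIntegrable.trans_iterate (a := fun i : ℕ => a + i * h) (n := N) fun i hi => by
    have hsub : Icc (a + i * h) (a + ↑(i + 1) * h) ⊆ Icc a (a + N * h) := by
      apply Icc_subset_Icc
      · nlinarith [(Nat.cast_nonneg i : (0:ℝ) ≤ i)]
      · gcongr
        exact_mod_cast hi
    refine intervalIntegrable_sq_sub_of_eqOn_Ioo (by push_cast; nlinarith) (hu.mono hsub)
      (q i).continuous.continuousOn fun x hx => hq i hi x ?_
    simpa using hx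
  simpa using this

lemma Polynomial.eval_add_eq_sum_iterate_derivative {K : Type*} [Field K] [CharZero K]
    {r : K[X]} {n : ℕ} (hr : r.natDegree ≤ n) (c s : K) :
    r.eval (c + s) = ∑ k ∈ Finset.range (n + 1), (derivative^[k] r).eval c / k ! * s ^ k := by
  rw [add_comm, ← taylor_eval, eval_eq_sum_range' (n := n + 1) (by rw [natDegree_taylor]; omega)]
  refine Finset.sum_congr rfl fun k _ => ?_
  rw [taylor_coeff, ← factorial_smul_hasseDeriv, LinearMap.smul_apply, eval_smul, nsmul_eq_mul,
    mul_div_cancel_left₀ _ (Nat.cast_ne_zero.2 k.factorial_ne_zero)]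

lemma fd_Dvec {p : ℕ} {h : ℝ} (hh : h ≠ 0) {ql qr : ℝ[X]} (hql : ql.natDegree ≤ p)
    (hqr : qr.natDegree ≤ p) (xi ξ : ℝ) :
    fd p (Dvec p h xi ql qr) ξ = (qr - ql).eval (xi + h * ξ) / (2 * h ^ (p + 1)) := by
  rw [(qr - ql).eval_add_eq_sum_iterate_derivative ((natDegree_sub_le _ _).trans (max_le hqr hql)),
    ← Fin.sum_univ_eq_sum_range, fd, Finset.mul_sum, Finset.sum_div]
  refine Finset.sum_congr rfl fun k _ => ?_
  have hpow : h ^ (p + 1) = h ^ (p + 1 - k) * h ^ (k : ℕ) := by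
    rw [← pow_add, Nat.sub_add_cancel k.is_lt.le]
  rw [Dvec, iterate_derivative_sub, eval_sub, hpow, mul_pow]
  field_simp

lemma Qerr_nonneg (p : ℕ) (d : Fin (p + 1) → ℝ) (v : ℝ[X]) : 0 ≤ Qerr p d v :=
  add_nonneg (intervalIntegral.integral_nonneg (by norm_num) fun _ _ => sq_nonneg _)
    (intervalIntegral.integral_nonneg (by norm_num) fun _ _ => sq_nonneg _)

lemma Qform_le_Qerr {p : ℕ} (d : Fin (p + 1) → ℝ) {v : ℝ[X]} (hv : v.natDegree ≤ p) :
    Qform p d ≤ Qerr p d v :=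
  csInf_le ⟨0, by rintro _ ⟨w, -, rfl⟩; exact Qerr_nonneg p d w⟩ ⟨v, hv, rfl⟩

lemma integral_sq_eval_comp_affine (r : ℝ[X]) {h : ℝ} (hh : h ≠ 0) (xi H α β : ℝ) :
    ∫ ξ in α..β, (r.eval (xi + h * ξ) / H) ^ 2 =
      h⁻¹ * (H ^ 2)⁻¹ * ∫ x in xi + h * α..xi + h * β, r.eval x ^ 2 := by
  rw [intervalIntegral.integral_comp_add_mul (fun x => (r.eval x / H) ^ 2) hh, smul_eq_mul]
  simp only [div_pow, intervalIntegral.integral_div]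
  ring

/-- The polynomial `v(ξ) = h^{-(p+1)} (w - (ql + qr)/2)(xi + hξ)` turns `Qerr` into the squared
distance from `w` to the two pieces on the two halves of `[xi - h/2, xi + h/2]`. -/
lemma Qform_le_integral {p : ℕ} {h : ℝ} (hh : 0 < h) {ql qr w : ℝ[X]} (hql : ql.natDegree ≤ p)
    (hqr : qr.natDegree ≤ p) (hw : w.natDegree ≤ p) (xi : ℝ) :
    (h ^ (p + 1)) ^ 2 * (h * Qform p (Dvec p h xi ql qr)) ≤
      (∫ x in xi - h / 2..xi, (w - ql).eval x ^ 2) +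
        ∫ x in xi..xi + h / 2, (w - qr).eval x ^ 2 := by
  set D := Dvec p h xi ql qr
  set v : ℝ[X] := C (h ^ (p + 1))⁻¹ * (w - C (1 / 2) * (ql + qr)).comp (C h * X + C xi)
  have hv : v.natDegree ≤ p := by
    have hmid : (w - C (1 / 2) * (ql + qr)).natDegree ≤ p :=
      (natDegree_sub_le _ _).trans (max_le hw ((natDegree_C_mul_le _ _).trans
        ((natDegree_add_le _ _).trans (max_le hql hqr))))
    exact (natDegree_C_mul_le _ _).trans (natDegree_comp_le.trans
      (by simpa using Nat.mul_le_mul hmid (natDegree_linear_le (b := xi))))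
  have hev : ∀ ξ, v.eval ξ = (w - C (1 / 2) * (ql + qr)).eval (xi + h * ξ) / h ^ (p + 1) := by
    intro ξ
    simp [v, eval_comp, div_eq_inv_mul, add_comm]
  have hleft : ∀ ξ, v.eval ξ + fd p D ξ = (w - ql).eval (xi + h * ξ) / h ^ (p + 1) := by
    intro ξ
    rw [hev, fd_Dvec hh.ne' hql hqr]
    simp only [eval_sub, eval_add, eval_mul, eval_C]
    field_simp
    ring
  have hright : ∀ ξ, v.eval ξ - fd p D ξ = (w - qr).eval (xi + h * ξ) / h ^ (p + 1) := by
    intro ξ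
    rw [hev, fd_Dvec hh.ne' hql hqr]
    simp only [eval_sub, eval_add, eval_mul, eval_C]
    field_simp
    ring
  have hQerr : (h ^ (p + 1)) ^ 2 * (h * Qerr p D v) =
      (∫ x in xi - h / 2..xi, (w - ql).eval x ^ 2) +
        ∫ x in xi..xi + h / 2, (w - qr).eval x ^ 2 := by
    simp only [Qerr, hleft, hright, integral_sq_eval_comp_affine _ hh.ne']
    field_simp
    ring_nf
  rw [← hQerr]
  gcongr
  exact Qform_le_Qerr D hv

noncomputable def taylorPolyWithin (f : ℝ → ℝ) (n : ℕ) (s : Set ℝ) (x₀ : ℝ) : ℝ[X] :=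
  ∑ k ∈ Finset.range (n + 1), C (taylorCoeffWithin f k s x₀) * (X - C x₀) ^ k

lemma eval_taylorPolyWithin (f : ℝ → ℝ) (n : ℕ) (s : Set ℝ) (x₀ x : ℝ) :
    (taylorPolyWithin f n s x₀).eval x = taylorWithinEval f n s x₀ x := by
  simp only [taylorPolyWithin, taylor_within_apply, taylorCoeffWithin, eval_finsetSum, eval_mul,
    eval_C, eval_pow, eval_sub, eval_X, smul_eq_mul]
  exact Finset.sum_congr rfl fun k _ => by ring

lemma natDegree_taylorPolyWithin_le (f : ℝ → ℝ) (n : ℕ) (s : Set ℝ) (x₀ : ℝ) :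
    (taylorPolyWithin f n s x₀).natDegree ≤ n :=
  natDegree_sum_le_of_forall_le _ _ fun k hk =>
    (natDegree_C_mul_le _ _).trans <| natDegree_pow_le.trans <| by
      rw [natDegree_X_sub_C, mul_one]
      exact Nat.lt_succ_iff.mp (Finset.mem_range.mp hk)

/-- Taylor's theorem with integral remainder, for derivatives taken within `Icc a b` (Mathlib's
`taylor_integral_remainder` takes them within `uIcc x₀ x`). -/
theorem taylor_integral_remainder_Icc {f : ℝ → ℝ} {a b x₀ x : ℝ} {n : ℕ}
    (hf : ContDiffOn ℝ (n + 1) f (Icc a b)) (hx₀ : x₀ ∈ Ioo a b) (hx : x ∈ Ioo a b) :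
    f x - taylorWithinEval f n (Icc a b) x₀ x =
      ∫ t in x₀..x, (x - t) ^ n / n ! * iteratedDerivWithin (n + 1) f (Icc a b) t := by
  have hab : a < b := hx₀.1.trans hx₀.2
  have hsub : uIcc x₀ x ⊆ Ioo a b := ordConnected_Ioo.uIcc_subset hx₀ hx
  have hderiv : ∀ t ∈ uIcc x₀ x, HasDerivAt (fun y => taylorWithinEval f n (Icc a b) y x)
      (((n ! : ℝ)⁻¹ * (x - t) ^ n) • iteratedDerivWithin (n + 1) f (Icc a b) t) t :=
    fun t ht => taylorWithinEval_hasDerivAt_Ioo x hab (hsub ht) (hf.of_le (by norm_cast; omega))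
      ((hf.differentiableOn_iteratedDerivWithin (by norm_cast; omega)
        (uniqueDiffOn_Icc hab)).mono Ioo_subset_Icc_self)
  have hcont : ContinuousOn (iteratedDerivWithin (n + 1) f (Icc a b)) (uIcc x₀ x) :=
    (hf.continuousOn_iteratedDerivWithin le_rfl (uniqueDiffOn_Icc hab)).mono
      (hsub.trans Ioo_subset_Icc_self)
  calc f x - taylorWithinEval f n (Icc a b) x₀ x
      = ∫ t in x₀..x,
          ((n ! : ℝ)⁻¹ * (x - t) ^ n) • iteratedDerivWithin (n + 1) f (Icc a b) t := by
        rw [intervalIntegral.integral_eq_sub_of_hasDerivAt hderiv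
          ((continuousOn_const.mul ((continuousOn_const.sub continuousOn_id).pow n)).smul
            hcont).intervalIntegrable, taylorWithinEval_self]
    _ = _ := intervalIntegral.integral_congr fun t _ => by simp only [smul_eq_mul]; ring

lemma abs_sub_taylorWithinEval_le {f : ℝ → ℝ} {a b c d x₀ x : ℝ} {n : ℕ}
    (hf : ContDiffOn ℝ (n + 1) f (Icc a b)) (hcd : Icc c d ⊆ Ioo a b) (hx₀ : x₀ ∈ Icc c d)
    (hx : x ∈ Icc c d) :
    |f x - taylorWithinEval f n (Icc a b) x₀ x| ≤
      (d - c) ^ n / n ! * ∫ t in c..d, |iteratedDerivWithin (n + 1) f (Icc a b) t| := by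
  set g := iteratedDerivWithin (n + 1) f (Icc a b)
  have hcd' : c ≤ d := hx₀.1.trans hx₀.2
  have hab : a < b := (hcd hx₀).1.trans (hcd hx₀).2
  have hg : ContinuousOn g (Icc c d) :=
    (hf.continuousOn_iteratedDerivWithin le_rfl (uniqueDiffOn_Icc hab)).mono
      (hcd.trans Ioo_subset_Icc_self)
  have hW : IntegrableOn (fun t => (x - t) ^ n / n ! * g t) (Ioc c d) :=
    ((((continuous_const.sub continuous_id).pow n).div_const _).continuousOn.mul
      hg).integrableOn_Icc.mono_set Ioc_subset_Icc_self
  have hK : IntegrableOn (fun t => (d - c) ^ n / n ! * |g t|) (Ioc c d) :=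
    (continuousOn_const.mul hg.abs).integrableOn_Icc.mono_set Ioc_subset_Icc_self
  have hsub : uIoc x₀ x ⊆ Ioc c d := Ioc_subset_Ioc (le_min hx₀.1 hx.1) (max_le hx₀.2 hx.2)
  rw [taylor_integral_remainder_Icc hf (hcd hx₀) (hcd hx)]
  calc |∫ t in x₀..x, (x - t) ^ n / n ! * g t|
      ≤ ∫ t in uIoc x₀ x, |(x - t) ^ n / n ! * g t| := by
        simpa only [Real.norm_eq_abs] using
          intervalIntegral.norm_integral_le_integral_norm_uIoc (μ := volume)
            (f := fun t => (x - t) ^ n / n ! * g t)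
    _ ≤ ∫ t in uIoc x₀ x, (d - c) ^ n / n ! * |g t| := by
        refine setIntegral_mono_on (hW.mono_set hsub).abs (hK.mono_set hsub) measurableSet_uIoc
          fun t ht => ?_
        have ht' := hsub ht
        rw [abs_mul, abs_div, abs_pow, Nat.abs_cast]
        gcongr
        exact abs_sub_le_of_le_of_le hx.1 hx.2 ht'.1.le ht'.2
    _ ≤ ∫ t in Ioc c d, (d - c) ^ n / n ! * |g t| :=
        setIntegral_mono_set hK (Filter.Eventually.of_forall fun t => by positivity)
          hsub.eventuallyLE
    _ = (d - c) ^ n / n ! * ∫ t in c..d, |g t| := by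
        rw [intervalIntegral.integral_of_le hcd', integral_const_mul]

lemma integral_sq_sub_taylorPolyWithin_le {f : ℝ → ℝ} {a b c d x₀ : ℝ} {n : ℕ}
    (hf : ContDiffOn ℝ (n + 1) f (Icc a b)) (hcd : Icc c d ⊆ Ioo a b) (hx₀ : x₀ ∈ Icc c d) :
    ∫ x in c..d, (f x - (taylorPolyWithin f n (Icc a b) x₀).eval x) ^ 2 ≤
      ((d - c) ^ (n + 1) / n !) ^ 2 *
        ∫ x in c..d, iteratedDerivWithin (n + 1) f (Icc a b) x ^ 2 := by
  set g := iteratedDerivWithin (n + 1) f (Icc a b)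
  set T := taylorPolyWithin f n (Icc a b) x₀
  have hcd' : c ≤ d := hx₀.1.trans hx₀.2
  have hab : a < b := (hcd hx₀).1.trans (hcd hx₀).2
  have hcdab : Icc c d ⊆ Icc a b := hcd.trans Ioo_subset_Icc_self
  have hg : ContinuousOn g (Icc c d) :=
    (hf.continuousOn_iteratedDerivWithin le_rfl (uniqueDiffOn_Icc hab)).mono hcdab
  have hpt : ∀ x ∈ Icc c d, (f x - T.eval x) ^ 2 ≤
      ((d - c) ^ n / n !) ^ 2 * ((d - c) * ∫ x in c..d, g x ^ 2) := by
    intro x hx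
    rw [eval_taylorPolyWithin, ← sq_abs]
    calc |f x - taylorWithinEval f n (Icc a b) x₀ x| ^ 2
        ≤ ((d - c) ^ n / n ! * ∫ t in c..d, |g t|) ^ 2 :=
          pow_le_pow_left₀ (abs_nonneg _) (abs_sub_taylorWithinEval_le hf hcd hx₀ hx) 2
      _ ≤ ((d - c) ^ n / n !) ^ 2 * ((d - c) * ∫ x in c..d, g x ^ 2) := by
          rw [mul_pow]
          refine mul_le_mul_of_nonneg_left ?_ (sq_nonneg _)
          exact sq_integral_abs_le hcd' (hg.intervalIntegrable_of_Icc hcd')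
            ((hg.pow 2).intervalIntegrable_of_Icc hcd')
  have hint : IntervalIntegrable (fun x => (f x - T.eval x) ^ 2) volume c d :=
    (((hf.continuousOn.mono hcdab).sub T.continuous.continuousOn).pow 2).intervalIntegrable_of_Icc
      hcd'
  calc _ ≤ ∫ _ in c..d, ((d - c) ^ n / n !) ^ 2 * ((d - c) * ∫ x in c..d, g x ^ 2) :=
        intervalIntegral.integral_mono_on hcd' hint intervalIntegrable_const hpt
    _ = _ := by
        rw [intervalIntegral.integral_const, smul_eq_mul]
        ring

lemma node_estimate {p : ℕ} {a b h t xi : ℝ} (hh : 0 < h) (ht : 0 < t) {u uR : ℝ → ℝ}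
    (hu : ContDiffOn ℝ (p + 1) u (Icc a b)) {ql qr : ℝ[X]} (hql : ql.natDegree ≤ p)
    (hqr : qr.natDegree ≤ p) (hcell : Icc (xi - h / 2) (xi + h / 2) ⊆ Ioo a b)
    (hl : EqOn uR ql.eval (Ioo (xi - h / 2) xi)) (hr : EqOn uR qr.eval (Ioo xi (xi + h / 2))) :
    (h ^ (p + 1)) ^ 2 * (h * Qform p (Dvec p h xi ql qr)) ≤
      (1 + t) * (∫ x in xi - h / 2..xi + h / 2, (u x - uR x) ^ 2) +
        (1 + 1 / t) * ((h ^ (p + 1) / p !) ^ 2 *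
          ∫ x in xi - h / 2..xi + h / 2, iteratedDerivWithin (p + 1) u (Icc a b) x ^ 2) := by
  set T := taylorPolyWithin u p (Icc a b) xi
  have hxi : xi ∈ Icc (xi - h / 2) (xi + h / 2) := ⟨by linarith, by linarith⟩
  have hu' : ContinuousOn u (Icc (xi - h / 2) (xi + h / 2)) :=
    hu.continuousOn.mono (hcell.trans Ioo_subset_Icc_self)
  have hT : ∀ s, ContinuousOn T.eval s := fun _ => T.continuous.continuousOn
  have hTl : IntervalIntegrable (fun x => (T.eval x - uR x) ^ 2) volume (xi - h / 2) xi :=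
    intervalIntegrable_sq_sub_of_eqOn_Ioo (by linarith) (hT _) ql.continuous.continuousOn hl
  have hTr : IntervalIntegrable (fun x => (T.eval x - uR x) ^ 2) volume xi (xi + h / 2) :=
    intervalIntegrable_sq_sub_of_eqOn_Ioo (by linarith) (hT _) qr.continuous.continuousOn hr
  have hE : IntervalIntegrable (fun x => (u x - uR x) ^ 2) volume (xi - h / 2) (xi + h / 2) :=
    (intervalIntegrable_sq_sub_of_eqOn_Ioo (by linarith)
      (hu'.mono (Icc_subset_Icc_right (by linarith))) ql.continuous.continuousOn hl).trans
    (intervalIntegrable_sq_sub_of_eqOn_Ioo (by linarith)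
      (hu'.mono (Icc_subset_Icc_left (by linarith))) qr.continuous.continuousOn hr)
  have hR : IntervalIntegrable (fun x => (u x - T.eval x) ^ 2) volume (xi - h / 2) (xi + h / 2) :=
    ((hu'.sub (hT _)).pow 2).intervalIntegrable_of_Icc (by linarith)
  calc (h ^ (p + 1)) ^ 2 * (h * Qform p (Dvec p h xi ql qr))
      ≤ (∫ x in xi - h / 2..xi, (T - ql).eval x ^ 2) +
          ∫ x in xi..xi + h / 2, (T - qr).eval x ^ 2 :=
        Qform_le_integral hh hql hqr (natDegree_taylorPolyWithin_le _ _ _ _) xi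
    _ = ∫ x in xi - h / 2..xi + h / 2, (T.eval x - uR x) ^ 2 := by
        rw [← intervalIntegral.integral_add_adjacent_intervals hTl hTr]
        congr 1 <;> refine intervalIntegral.integral_congr_Ioo_of_le (by linarith) fun x hx => ?_
        · simp [hl hx]
        · simp [hr hx]
    _ ≤ ∫ x in xi - h / 2..xi + h / 2,
          ((1 + t) * (u x - uR x) ^ 2 + (1 + 1 / t) * (u x - T.eval x) ^ 2) :=
        intervalIntegral.integral_mono_on (by linarith) (hTl.trans hTr)
          ((hE.const_mul _).add (hR.const_mul _)) fun x _ =>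
            (le_of_eq (by ring)).trans
              ((add_sq_le_weighted (u x - uR x) (T.eval x - u x) ht).trans_eq (by ring))
    _ ≤ _ := by
        rw [intervalIntegral.integral_add (hE.const_mul _) (hR.const_mul _),
          intervalIntegral.integral_const_mul, intervalIntegral.integral_const_mul]
        gcongr
        simpa using integral_sq_sub_taylorPolyWithin_le hu hcell hxi

lemma sum_node_estimates {p N : ℕ} (hN : 0 < N) {a b h t : ℝ} (hh : 0 < h)
    (hb : b = a + N * h) (ht : 0 < t) {u uR : ℝ → ℝ} (hu : ContDiffOn ℝ (p + 1) u (Icc a b))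
    {q : ℕ → ℝ[X]} (hdeg : ∀ i < N, (q i).natDegree ≤ p)
    (hq : ∀ i < N, ∀ x ∈ Ioo (a + i * h) (a + (i + 1) * h), uR x = (q i).eval x) :
    (h ^ (p + 1)) ^ 2 *
        ∑ i ∈ Finset.Ico 1 N, h * Qform p (Dvec p h (a + i * h) (q (i - 1)) (q i)) ≤
      (1 + t) * (∫ x in a..b, (u x - uR x) ^ 2) +
        (1 + 1 / t) * ((h ^ (p + 1) / p !) ^ 2 *
          ∫ x in a..b, iteratedDerivWithin (p + 1) u (Icc a b) x ^ 2) := by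
  have hN' : (1 : ℝ) ≤ N := by exact_mod_cast hN
  have hab : a < b := by rw [hb]; nlinarith
  set c : ℕ → ℝ := fun i => a + i * h - h / 2
  have hc : Monotone c := fun i j hij => by
    simp only [c]
    gcongr
  have hnode : ∀ i ∈ Finset.Ico 1 N,
      (h ^ (p + 1)) ^ 2 * (h * Qform p (Dvec p h (a + i * h) (q (i - 1)) (q i))) ≤
        (1 + t) * (∫ x in c i..c (i + 1), (u x - uR x) ^ 2) +
          (1 + 1 / t) * ((h ^ (p + 1) / p !) ^ 2 *
            ∫ x in c i..c (i + 1), iteratedDerivWithin (p + 1) u (Icc a b) x ^ 2) := by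
    intro i hi
    obtain ⟨hi1, hiN⟩ := Finset.mem_Ico.mp hi
    have hi1' : (1 : ℝ) ≤ i := by exact_mod_cast hi1
    have hiN' : (i : ℝ) + 1 ≤ N := by exact_mod_cast hiN
    have hci : c (i + 1) = a + i * h + h / 2 := by
      simp only [c]
      push_cast
      ring
    rw [hci]
    refine node_estimate hh ht hu (hdeg _ (by omega)) (hdeg i hiN) ?_ ?_ ?_
    · intro x hx
      constructor <;> nlinarith [hx.1, hx.2]
    · intro x hx
      refine hq (i - 1) (by omega) x ?_
      push_cast [Nat.cast_sub hi1]
      constructor <;> nlinarith [hx.1, hx.2]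
    · intro x hx
      refine hq i hiN x ⟨hx.1, by linarith [hx.2]⟩
  have hca : a ≤ c 1 := by simp only [c]; push_cast; linarith
  have hcb : c N ≤ b := by simp only [c]; linarith
  have hE : IntervalIntegrable (fun x => (u x - uR x) ^ 2) volume a b := by
    subst hb
    exact intervalIntegrable_sq_sub_of_piecewise hh.le hu.continuousOn q hq
  have hF : IntervalIntegrable (fun x => iteratedDerivWithin (p + 1) u (Icc a b) x ^ 2)
      volume a b :=
    ((hu.continuousOn_iteratedDerivWithin le_rfl (uniqueDiffOn_Icc hab)).pow
      2).intervalIntegrable_of_Icc hab.le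
  rw [Finset.mul_sum]
  refine (Finset.sum_le_sum hnode).trans ?_
  rw [Finset.sum_add_distrib, ← Finset.mul_sum, ← Finset.mul_sum, ← Finset.mul_sum]
  gcongr <;> exact sum_integral_le_integral_of_nonneg hN hc hca hcb (fun x => sq_nonneg _) ‹_›

/-- Theorem 2 of the paper, L² lower bound:
`‖u - u^R‖_{L²} ≥ h^{p+1} [ (Σᵢ h Q(Dᵢ))^{1/2} - C₂ |u|_{H^{p+1}} ]`. -/
theorem L2_lower_bound (p : ℕ) :
    ∃ C₂ : ℝ, 0 < C₂ ∧
      ∀ (a b : ℝ), a < b → ∀ N : ℕ, 0 < N → ∀ h : ℝ, h = (b - a) / N →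
      ∀ u : ℝ → ℝ, ContDiffOn ℝ (p+1) u (Set.Icc a b) →
      ∀ (uR : ℝ → ℝ) (q : ℕ → Polynomial ℝ),
        (∀ i < N, (q i).natDegree ≤ p) →
        (∀ i < N, ∀ x ∈ Set.Ioo (a + i*h) (a + (i+1)*h), uR x = (q i).eval x) →
        Real.sqrt (∫ x in a..b, (u x - uR x)^2) ≥
          h^(p+1) *
            (Real.sqrt (∑ i ∈ Finset.Ico 1 N,
                h * Qform p (Dvec p h (a + i*h) (q (i-1)) (q i)))
              - C₂ * Real.sqrt
                  (∫ x in a..b, (iteratedDerivWithin (p+1) u (Set.Icc a b) x)^2)) := by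
  refine ⟨(p ! : ℝ)⁻¹, by positivity, ?_⟩
  intro a b hab N hN h h_def u hu uR q hdeg hq
  have hh : 0 < h := h_def ▸ div_pos (sub_pos.2 hab) (Nat.cast_pos.2 hN)
  have hb : b = a + N * h := by
    rw [h_def]
    field_simp
    ring
  set S := ∑ i ∈ Finset.Ico 1 N, h * Qform p (Dvec p h (a + i * h) (q (i - 1)) (q i))
  set E := ∫ x in a..b, (u x - uR x) ^ 2
  set F := ∫ x in a..b, iteratedDerivWithin (p + 1) u (Icc a b) x ^ 2
  have hE : 0 ≤ E := intervalIntegral.integral_nonneg hab.le fun _ _ => sq_nonneg _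
  have hF : 0 ≤ F := intervalIntegral.integral_nonneg hab.le fun _ _ => sq_nonneg _
  have hS : h ^ (p + 1) * √S = √((h ^ (p + 1)) ^ 2 * S) := by
    rw [Real.sqrt_mul (sq_nonneg _), Real.sqrt_sq (by positivity)]
  have key : h ^ (p + 1) * √S ≤ √E + h ^ (p + 1) / p ! * √F := by
    rw [hS]
    refine sqrt_le_add_of_forall_pos (Real.sqrt_nonneg _) (by positivity) fun t ht => ?_
    rw [Real.sq_sqrt hE, mul_pow, Real.sq_sqrt hF]
    exact sum_node_estimates hN hh hb ht hu hdeg hq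
  calc h ^ (p + 1) * (√S - (p ! : ℝ)⁻¹ * √F) = h ^ (p + 1) * √S - h ^ (p + 1) / p ! * √F := by
        ring
    _ ≤ √E := by linarith
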